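/- Under restricted additive valuations, an EFX+ and Pareto-efficient complete allocation always exists and can be computed in time O(m log m + mn). -/

import Mathlib

/-!
Hand out the goods in order of decreasing weight, each to an agent of least current utility
among those valuing it (to any agent if nobody does; then its weight is `0`). Every agent values
each of its goods at full weight, so the welfare of the result is the total weight, which no
allocation can exceed: this gives Pareto efficiency. EFX⁺ survives each step: an agent `i ≠ j`
who values the new good `g` had utility at least that of the recipient `j`, whose old bundle is
worth at least the new bundle minus any of its goods, since `g` is the lightest of them.
-/

open Finset

section Restricted

variable {A G : Type*} (v : A → G → ℝ) (w : G → ℝ)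

/-- The invariant of the greedy algorithm after it has handed out the goods of `s`. -/
structure IsNonwastefulEFX [DecidableEq G] (s : Finset G) (X : A → Finset G) : Prop where
  disjoint : Pairwise fun a b => Disjoint (X a) (X b)
  subset : ∀ a, X a ⊆ s
  cover : ∀ g ∈ s, ∃ a, g ∈ X a
  valued : ∀ a, ∀ g ∈ X a, v a g = w g
  efx : ∀ i j, ∀ g ∈ X j, 0 < v i g → ∑ x ∈ (X j).erase g, v i x ≤ ∑ x ∈ X i, v i x

variable {v w}

lemma valuation_nonneg (hw : ∀ g, 0 ≤ w g) (hres : ∀ a g, v a g = 0 ∨ v a g = w g)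
    (a : A) (g : G) : 0 ≤ v a g :=
  (hres a g).elim (fun h => h.symm ▸ le_rfl) (fun h => h.symm ▸ hw g)

lemma valuation_le_weight (hw : ∀ g, 0 ≤ w g) (hres : ∀ a g, v a g = 0 ∨ v a g = w g)
    (a : A) (g : G) : v a g ≤ w g :=
  (hres a g).elim (fun h => h.symm ▸ hw g) le_of_eq

lemma sum_erase_insert_le_of_le_weight [DecidableEq G] {f : G → ℝ} (hf : ∀ x, f x ≤ w x)
    {g g' : G} {t : Finset G} (hg : g ∉ t) (hg' : g' ∈ insert g t) (hgg' : w g ≤ w g') :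
    ∑ x ∈ (insert g t).erase g', f x ≤ ∑ x ∈ t, w x :=
  calc ∑ x ∈ (insert g t).erase g', f x
      ≤ ∑ x ∈ (insert g t).erase g', w x := sum_le_sum fun x _ => hf x
    _ = w g + ∑ x ∈ t, w x - w g' := by
      rw [← sum_insert hg, ← sum_erase_add _ _ hg', add_sub_cancel_right]
    _ ≤ ∑ x ∈ t, w x := by linarith

lemma exists_poorest_agent_valuing [Fintype A] [Nonempty A]
    (hres : ∀ a g, v a g = 0 ∨ v a g = w g) (hzero : ∀ g, (∀ a, v a g = 0) → w g = 0)
    (X : A → Finset G) (g : G) :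
    ∃ j, v j g = w g ∧ ∀ i, v i g = w g → ∑ x ∈ X j, v j x ≤ ∑ x ∈ X i, v i x := by
  classical
  have hne : (univ.filter fun a => v a g = w g).Nonempty := by
    by_cases hnone : ∀ a, v a g = 0
    · exact ⟨Classical.arbitrary A, by simp [hnone, hzero g hnone]⟩
    · obtain ⟨a, ha⟩ := not_forall.mp hnone
      exact ⟨a, by simpa using (hres a g).resolve_left ha⟩
  obtain ⟨j, hj, hmin⟩ := exists_min_image _ (fun a => ∑ x ∈ X a, v a x) hne
  exact ⟨j, (mem_filter.mp hj).2, fun i hi => hmin i (by simpa using hi)⟩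

theorem IsNonwastefulEFX.update_insert [DecidableEq A] [DecidableEq G]
    (hw : ∀ g, 0 ≤ w g) (hres : ∀ a g, v a g = 0 ∨ v a g = w g)
    {s : Finset G} {X : A → Finset G} (hX : IsNonwastefulEFX v w s X)
    {g : G} (hgs : g ∉ s) (hlightest : ∀ x ∈ s, w g ≤ w x) {j : A} (hj : v j g = w g)
    (hpoorest : ∀ i, v i g = w g → ∑ x ∈ X j, v j x ≤ ∑ x ∈ X i, v i x) :
    IsNonwastefulEFX v w (insert g s) (Function.update X j (insert g (X j))) := by
  set X' := Function.update X j (insert g (X j))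
  have hX'j : X' j = insert g (X j) := Function.update_self ..
  have hX'ne : ∀ a, a ≠ j → X' a = X a := fun a ha => Function.update_of_ne ha ..
  have hgX : ∀ a, g ∉ X a := fun a hga => hgs (hX.subset a hga)
  have hXX' : ∀ a, X a ⊆ X' a := by
    intro a
    rcases eq_or_ne a j with rfl | ha
    · exact hX'j ▸ subset_insert _ _
    · exact (hX'ne a ha).ge
  refine ⟨?_, ?_, ?_, ?_, ?_⟩
  · intro a b hab
    rcases eq_or_ne a j with rfl | ha
    · rw [hX'j, hX'ne b hab.symm, disjoint_insert_left]
      exact ⟨hgX b, hX.disjoint hab⟩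
    rcases eq_or_ne b j with rfl | hb
    · rw [hX'j, hX'ne a ha, disjoint_insert_right]
      exact ⟨hgX a, hX.disjoint hab⟩
    rw [hX'ne a ha, hX'ne b hb]
    exact hX.disjoint hab
  · intro a
    rcases eq_or_ne a j with rfl | ha
    · exact hX'j ▸ insert_subset_insert g (hX.subset a)
    · exact hX'ne a ha ▸ (hX.subset a).trans (subset_insert g s)
  · intro x hx
    rcases mem_insert.mp hx with rfl | hx
    · exact ⟨j, hX'j ▸ mem_insert_self x _⟩
    · obtain ⟨a, ha⟩ := hX.cover x hx
      exact ⟨a, hXX' a ha⟩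
  · intro a x hx
    rcases eq_or_ne a j with rfl | ha
    · rcases mem_insert.mp (hX'j ▸ hx) with rfl | hx
      exacts [hj, hX.valued a x hx]
    · exact hX.valued a x (hX'ne a ha ▸ hx)
  · intro i k x hx hpos
    have hgrow : ∑ y ∈ X i, v i y ≤ ∑ y ∈ X' i, v i y :=
      sum_le_sum_of_subset_of_nonneg (hXX' i) fun y _ _ => valuation_nonneg hw hres i y
    rcases eq_or_ne k j with rfl | hk
    swap
    · rw [hX'ne k hk] at hx ⊢
      exact (hX.efx i k x hx hpos).trans hgrow
    rcases eq_or_ne i k with rfl | hi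
    · exact sum_le_sum_of_subset_of_nonneg (erase_subset x _)
        fun y _ _ => valuation_nonneg hw hres i y
    rw [hX'j] at hx ⊢
    rw [hX'ne i hi]
    rcases hres i g with hig | hig
    · have hxg : x ≠ g := by rintro rfl; linarith
      rw [erase_insert_of_ne hxg.symm, sum_insert fun h => hgX k (mem_of_mem_erase h), hig,
        zero_add]
      exact hX.efx i k x ((mem_insert.mp hx).resolve_left hxg) hpos
    · have hgx : w g ≤ w x := by
        rcases mem_insert.mp hx with rfl | hx
        exacts [le_rfl, hlightest x (hX.subset k hx)]
      calc ∑ y ∈ (insert g (X k)).erase x, v i y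
          ≤ ∑ y ∈ X k, w y :=
            sum_erase_insert_le_of_le_weight (valuation_le_weight hw hres i) (hgX k) hx hgx
        _ = ∑ y ∈ X k, v k y := sum_congr rfl fun y hy => (hX.valued k y hy).symm
        _ ≤ ∑ y ∈ X i, v i y := hpoorest i hig

theorem exists_isNonwastefulEFX [Fintype A] [Nonempty A] [DecidableEq A] [DecidableEq G]
    (hw : ∀ g, 0 ≤ w g) (hres : ∀ a g, v a g = 0 ∨ v a g = w g)
    (hzero : ∀ g, (∀ a, v a g = 0) → w g = 0) (s : Finset G) :
    ∃ X : A → Finset G, IsNonwastefulEFX v w s X := by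
  induction s using induction_on_min_value w with
  | empty => exact ⟨fun _ => ∅, ⟨fun _ _ _ => disjoint_empty_left _, by simp, by simp, by simp, by simp⟩⟩
  | insert g s hgs hlightest ih =>
    obtain ⟨X, hX⟩ := ih
    obtain ⟨j, hj, hpoorest⟩ := exists_poorest_agent_valuing hres hzero X g
    exact ⟨_, hX.update_insert hw hres hgs hlightest hj hpoorest⟩

lemma sum_sum_eq_sum_of_partition [Fintype A] [Fintype G] [DecidableEq G] {M : Type*}
    [AddCommMonoid M] (f : G → M) {Z : A → Finset G}
    (hdisj : Pairwise fun a b => Disjoint (Z a) (Z b)) (hcover : ∀ g, ∃ a, g ∈ Z a) :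
    ∑ a, ∑ x ∈ Z a, f x = ∑ g, f g := by
  rw [← sum_biUnion fun a _ b _ hab => hdisj hab]
  congr
  exact eq_univ_of_forall fun g => mem_biUnion.mpr ((hcover g).imp fun a ha => ⟨mem_univ a, ha⟩)

theorem not_paretoDominated_of_valued [Fintype A] [Fintype G] [DecidableEq G]
    (hvw : ∀ a g, v a g ≤ w g) {X : A → Finset G}
    (hdisj : Pairwise fun a b => Disjoint (X a) (X b)) (hcover : ∀ g, ∃ a, g ∈ X a)
    (hvalued : ∀ a, ∀ g ∈ X a, v a g = w g) :
    ¬ ∃ Y : A → Finset G,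
      (Pairwise fun a b => Disjoint (Y a) (Y b)) ∧ (∀ g : G, ∃ a, g ∈ Y a) ∧
      (∀ a, ∑ x ∈ X a, v a x ≤ ∑ x ∈ Y a, v a x) ∧
      (∃ a, ∑ x ∈ X a, v a x < ∑ x ∈ Y a, v a x) := by
  rintro ⟨Y, hYdisj, hYcover, hle, a, hlt⟩
  have hXwelfare : ∑ a, ∑ x ∈ X a, v a x = ∑ g, w g := by
    rw [← sum_sum_eq_sum_of_partition w hdisj hcover]
    exact sum_congr rfl fun a _ => sum_congr rfl (hvalued a)
  have hYwelfare : ∑ a, ∑ x ∈ Y a, v a x ≤ ∑ g, w g := by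
    rw [← sum_sum_eq_sum_of_partition w hYdisj hYcover]
    exact sum_le_sum fun a _ => sum_le_sum fun x _ => hvw a x
  have hstrict : ∑ a, ∑ x ∈ X a, v a x < ∑ a, ∑ x ∈ Y a, v a x :=
    sum_lt_sum (fun a _ => hle a) ⟨a, mem_univ a, hlt⟩
  linarith

end Restricted

/-- Under restricted additive valuations, an EFX⁺ and
Pareto-efficient complete allocation always exists. -/
theorem stmt_8 (A G : Type) [Fintype A] [Fintype G] [DecidableEq A] [DecidableEq G]
    [Nonempty A]
    (v : A → G → ℝ) (w : G → ℝ) (hw : ∀ g, 0 ≤ w g)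
    (hres : ∀ a g, v a g = 0 ∨ v a g = w g)
    (hzero : ∀ g : G, (∀ a, v a g = 0) → w g = 0) :
    ∃ X : A → Finset G,
      (Pairwise fun a b => Disjoint (X a) (X b)) ∧
      (∀ g : G, ∃ a, g ∈ X a) ∧
      -- EFX⁺
      (∀ i j : A, ∀ g ∈ X j,
        ∑ x ∈ (X j).erase g, v i x < ∑ x ∈ X j, v i x →
        ∑ x ∈ (X j).erase g, v i x ≤ ∑ x ∈ X i, v i x) ∧
      -- Pareto efficient
      (¬ ∃ Y : A → Finset G,
          (Pairwise fun a b => Disjoint (Y a) (Y b)) ∧ (∀ g : G, ∃ a, g ∈ Y a) ∧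
          (∀ a, ∑ x ∈ X a, v a x ≤ ∑ x ∈ Y a, v a x) ∧
          (∃ a, ∑ x ∈ X a, v a x < ∑ x ∈ Y a, v a x)) := by
  obtain ⟨X, hX⟩ := exists_isNonwastefulEFX hw hres hzero univ
  have hcover : ∀ g, ∃ a, g ∈ X a := fun g => hX.cover g (mem_univ g)
  refine ⟨X, hX.disjoint, hcover, fun i j g hg hlt => hX.efx i j g hg ?_,
    not_paretoDominated_of_valued (valuation_le_weight hw hres) hX.disjoint hcover hX.valued⟩
  linarith [sum_erase_add (X j) (v i) hg]
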